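/- arXiv:2411.04743 — 3 statements merged into one kernel-verified Lean document; each statement's English description precedes it below -/
import Mathlib

section
/- Let C be a category with finite limits and L : C ⇄ D : R an adjunction between pointed categories with finite limits such that for some n both Ωⁿ(unit) and Ωⁿ(counit) are natural equivalences. Then the induced functor on stabilizations Sp(R) : Sp(D) → Sp(C) is an equivalence. -/
open CategoryTheory Limits

/-- `n`-fold iterate of an endofunctor (playing the role of `Ωⁿ`). -/
def iterFunctor {C : Type*} [Category C] (F : C ⥤ C) : ℕ → C ⥤ C
  | 0 => 𝟭 C
  | n + 1 => iterFunctor F n ⋙ F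

/-- The category of spectrum objects with respect to an endofunctor `Ω` (the "loop functor"):
the limit of the tower `⋯ → C → C → C` along `Ω`, modelled as sequences `X n` together with
equivalences `X n ≅ Ω (X (n+1))`. -/
structure SpectrumObj {C : Type*} [Category C] (Om : C ⥤ C) where
  pt : ℕ → C
  str : ∀ n : ℕ, pt n ≅ Om.obj (pt (n + 1))

@[ext]
structure SpectrumHom {C : Type*} [Category C] {Om : C ⥤ C} (A B : SpectrumObj Om) where
  f : ∀ n : ℕ, A.pt n ⟶ B.pt n
  comm : ∀ n : ℕ, f n ≫ (B.str n).hom = (A.str n).hom ≫ Om.map (f (n + 1))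

instance {C : Type*} [Category C] (Om : C ⥤ C) : Category (SpectrumObj Om) where
  Hom := SpectrumHom
  id A := ⟨fun _ => 𝟙 _, fun n => by simp⟩
  comp g h :=
    ⟨fun n => g.f n ≫ h.f n, fun n => by
      rw [Category.assoc, h.comm n, ← Category.assoc, g.comm n, Category.assoc,
        ← Functor.map_comp]⟩
  id_comp := by intro A B φ; apply SpectrumHom.ext; funext n; simp
  comp_id := by intro A B φ; apply SpectrumHom.ext; funext n; simp
  assoc := by intro A B C' D' φ ψ χ; apply SpectrumHom.ext; funext n; simp

/-- The functor `Sp(R) : Sp(D) → Sp(C)` induced on spectrum objects by a functor `R : D ⥤ C`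
commuting with the loop functors via `cR`. -/
def spMap {C D : Type*} [Category C] [Category D] (OmC : C ⥤ C) (OmD : D ⥤ D)
    (R : D ⥤ C) (cR : OmD ⋙ R ≅ R ⋙ OmC) : SpectrumObj OmD ⥤ SpectrumObj OmC where
  obj A :=
    { pt := fun n => R.obj (A.pt n)
      str := fun n => R.mapIso (A.str n) ≪≫ cR.app (A.pt (n + 1)) }
  map {A B} φ :=
    { f := fun n => R.map (φ.f n)
      comm := fun n => by
        have hnat := cR.hom.naturality (φ.f (n + 1))
        simp only [Functor.comp_map] at hnat
        simp only [Iso.trans_hom, Functor.mapIso_hom, Iso.app_hom]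
        rw [← Category.assoc, ← R.map_comp, φ.comm n, R.map_comp, Category.assoc, hnat,
          ← Category.assoc] }
  map_id := by intro A; apply SpectrumHom.ext; funext n; exact R.map_id _
  map_comp := by intro A B C' φ ψ; apply SpectrumHom.ext; funext n; exact R.map_comp _ _

/-!
Put `N = 2n`. The mate `γ : L Ω ⟶ Ω L` of `cR⁻¹` becomes invertible after `Ωᴺ`: by the unit,
`Ωⁿ (R γ)` is invertible, hence so is `R (Ωⁿ γ)`, and `Ωⁿ` turns the counit, and with it every
map inverted by `R`, into an isomorphism. Thus `Ωᴺ L` commutes with the loop functors and induces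
a functor `Sp(C) ⥤ Sp(D)`. Since `Sp` preserves composites and compatible natural isomorphisms,
`Ωᴺ η` and `Ωᴺ ε` identify both composites of `Sp(R)` with this functor with `Sp(Ωᴺ)`, which is an
equivalence because `Sp(Ω)` is inverse to the shift `(Xₖ)ₖ ↦ (Xₖ₊₁)ₖ`.
-/

namespace SpectrumObj

variable {C : Type*} [Category C] {Om : C ⥤ C}

@[simp]
lemma comp_f {A B E : SpectrumObj Om} (φ : A ⟶ B) (ψ : B ⟶ E) (n : ℕ) :
    SpectrumHom.f (φ ≫ ψ) n = SpectrumHom.f φ n ≫ SpectrumHom.f ψ n := rfl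

@[ext]
lemma hom_ext {A B : SpectrumObj Om} {φ ψ : A ⟶ B}
    (h : ∀ n, SpectrumHom.f φ n = SpectrumHom.f ψ n) : φ = ψ :=
  SpectrumHom.ext (funext h)

def isoMk {A B : SpectrumObj Om} (e : ∀ n, A.pt n ≅ B.pt n)
    (he : ∀ n, (e n).hom ≫ (B.str n).hom = (A.str n).hom ≫ Om.map (e (n + 1)).hom) : A ≅ B where
  hom := ⟨fun n => (e n).hom, he⟩
  inv := ⟨fun n => (e n).inv, fun n => by
    rw [Iso.inv_comp_eq, ← Category.assoc, he, Category.assoc, ← Om.map_comp,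
      Iso.hom_inv_id, Om.map_id, Category.comp_id]⟩

@[simp]
lemma isoMk_hom_f {A B : SpectrumObj Om} (e : ∀ n, A.pt n ≅ B.pt n)
    (he : ∀ n, (e n).hom ≫ (B.str n).hom = (A.str n).hom ≫ Om.map (e (n + 1)).hom) (n : ℕ) :
    SpectrumHom.f (isoMk e he).hom n = (e n).hom := rfl

variable (Om) in
@[simps]
def shift : SpectrumObj Om ⥤ SpectrumObj Om where
  obj A := ⟨fun n => A.pt (n + 1), fun n => A.str (n + 1)⟩
  map φ := ⟨fun n => SpectrumHom.f φ (n + 1), fun n => φ.comm (n + 1)⟩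

end SpectrumObj

open SpectrumObj

section spMap

variable {A B E : Type*} [Category A] [Category B] [Category E]
  {OmA : A ⥤ A} {OmB : B ⥤ B} {OmE : E ⥤ E}

@[simp]
lemma spMap_obj_pt (F : B ⥤ A) (cF : OmB ⋙ F ≅ F ⋙ OmA) (X : SpectrumObj OmB) (n : ℕ) :
    ((spMap OmA OmB F cF).obj X).pt n = F.obj (X.pt n) := rfl

@[simp]
lemma spMap_obj_str_hom (F : B ⥤ A) (cF : OmB ⋙ F ≅ F ⋙ OmA) (X : SpectrumObj OmB) (n : ℕ) :
    (((spMap OmA OmB F cF).obj X).str n).hom = F.map (X.str n).hom ≫ cF.hom.app (X.pt (n + 1)) :=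
  rfl

@[simps!]
def commComp {F : A ⥤ B} {G : B ⥤ E} (cF : OmA ⋙ F ≅ F ⋙ OmB) (cG : OmB ⋙ G ≅ G ⋙ OmE) :
    OmA ⋙ F ⋙ G ≅ F ⋙ G ⋙ OmE :=
  NatIso.ofComponents (fun X => G.mapIso (cF.app X) ≪≫ cG.app (F.obj X)) fun f => by
    have h := cF.hom.naturality f
    dsimp at h ⊢
    rw [← G.map_comp_assoc, h, G.map_comp_assoc]
    simpa using congrArg _ (cG.hom.naturality (F.map f))

def spMapCompIso {F : B ⥤ A} {G : A ⥤ E} (cF : OmB ⋙ F ≅ F ⋙ OmA)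
    (cG : OmA ⋙ G ≅ G ⋙ OmE) :
    spMap OmE OmB (F ⋙ G) (commComp cF cG) ≅ spMap OmA OmB F cF ⋙ spMap OmE OmA G cG :=
  NatIso.ofComponents (fun X => isoMk (fun n => Iso.refl _) fun n => by simp) fun φ => by
    ext n; exact (Category.comp_id _).trans (Category.id_comp _).symm

def spMapIso {F F' : B ⥤ A} {cF : OmB ⋙ F ≅ F ⋙ OmA} {cF' : OmB ⋙ F' ≅ F' ⋙ OmA}
    (α : F ≅ F')
    (hα : ∀ X, cF.hom.app X ≫ OmA.map (α.hom.app X) = α.hom.app (OmB.obj X) ≫ cF'.hom.app X) :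
    spMap OmA OmB F cF ≅ spMap OmA OmB F' cF' :=
  NatIso.ofComponents (fun X => isoMk (fun n => α.app (X.pt n)) fun n => by
      simp [hα, α.hom.naturality_assoc]) fun φ => by
    ext n; exact α.hom.naturality _

end spMap

section iterFunctor

variable {C : Type*} [Category C]

@[simp]
lemma iterFunctor_zero_obj (Om : C ⥤ C) (X : C) : (iterFunctor Om 0).obj X = X := rfl

@[simp]
lemma iterFunctor_zero_map (Om : C ⥤ C) {X Y : C} (f : X ⟶ Y) : (iterFunctor Om 0).map f = f :=
  rfl

@[simp]
lemma iterFunctor_succ_obj (Om : C ⥤ C) (k : ℕ) (X : C) :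
    (iterFunctor Om (k + 1)).obj X = Om.obj ((iterFunctor Om k).obj X) := rfl

@[simp]
lemma iterFunctor_succ_map (Om : C ⥤ C) (k : ℕ) {X Y : C} (f : X ⟶ Y) :
    (iterFunctor Om (k + 1)).map f = Om.map ((iterFunctor Om k).map f) := rfl

lemma iterFunctor_add (Om : C ⥤ C) (a b : ℕ) :
    iterFunctor Om (a + b) = iterFunctor Om a ⋙ iterFunctor Om b := by
  induction b with
  | zero => rfl
  | succ b ih => exact congrArg (· ⋙ Om) ih

lemma isIso_iterFunctor_map_add (Om : C ⥤ C) (a b : ℕ) {X Y : C} (f : X ⟶ Y)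
    [IsIso ((iterFunctor Om a).map f)] : IsIso ((iterFunctor Om (a + b)).map f) := by
  rw [iterFunctor_add]
  exact inferInstanceAs (IsIso ((iterFunctor Om b).map ((iterFunctor Om a).map f)))

def iterFunctorComm (Om : C ⥤ C) : ∀ k, Om ⋙ iterFunctor Om k ≅ iterFunctor Om k ⋙ Om
  | 0 => Iso.refl _
  | k + 1 => commComp (iterFunctorComm Om k) (Iso.refl (Om ⋙ Om))

@[simp]
lemma iterFunctorComm_zero_hom_app (Om : C ⥤ C) (X : C) :
    (iterFunctorComm Om 0).hom.app X = 𝟙 _ := rfl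

lemma iterFunctorComm_succ_hom_app (Om : C ⥤ C) (k : ℕ) (X : C) :
    (iterFunctorComm Om (k + 1)).hom.app X = Om.map ((iterFunctorComm Om k).hom.app X) :=
  Category.comp_id _

variable (Om : C ⥤ C)

def spMapIdIso : spMap Om Om (𝟭 C) (Iso.refl _) ≅ 𝟭 (SpectrumObj Om) :=
  NatIso.ofComponents (fun X => isoMk (fun n => Iso.refl _) fun n => by simp) fun φ => by
    ext n; exact (Category.comp_id _).trans (Category.id_comp _).symm

def spMapLoopShiftIso : 𝟭 (SpectrumObj Om) ≅ spMap Om Om Om (Iso.refl _) ⋙ shift Om :=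
  NatIso.ofComponents (fun X => isoMk X.str fun n => by simp; rfl) fun φ => by
    ext n; exact φ.comm n

instance spMap_loop_isEquivalence : (spMap Om Om Om (Iso.refl _)).IsEquivalence :=
  (CategoryTheory.Equivalence.mk _ (shift Om) (spMapLoopShiftIso Om) (spMapLoopShiftIso Om).symm)
    |>.isEquivalence_functor

instance spMap_iterFunctor_isEquivalence (k : ℕ) :
    (spMap Om Om (iterFunctor Om k) (iterFunctorComm Om k)).IsEquivalence := by
  induction k with
  | zero => exact Functor.isEquivalence_of_iso (spMapIdIso Om).symm
  | succ k ih => exact Functor.isEquivalence_of_iso (spMapCompIso _ (Iso.refl (Om ⋙ Om))).symm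

end iterFunctor

section Adjunction

variable {C D : Type*} [Category C] [Category D] {OmC : C ⥤ C} {OmD : D ⥤ D} {L : C ⥤ D}
  {R : D ⥤ C} (adj : L ⊣ R) (cR : OmD ⋙ R ≅ R ⋙ OmC)

def loopComparison : OmC ⋙ L ⟶ L ⋙ OmD :=
  (mateEquiv adj adj).symm (TwoSquare.mk R OmD OmC R cR.inv)

lemma unit_comp_map_loopComparison (X : C) :
    adj.unit.app (OmC.obj X) ≫ R.map ((loopComparison adj cR).app X) =
      OmC.map (adj.unit.app X) ≫ cR.inv.app (L.obj X) :=
  (unit_mateEquiv_symm adj adj (TwoSquare.mk R OmD OmC R cR.inv) X).symm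

lemma map_loopComparison_counit (Y : D) :
    L.map (cR.hom.app Y) ≫ (loopComparison adj cR).app (R.obj Y) ≫ OmD.map (adj.counit.app Y) =
      adj.counit.app (OmD.obj Y) := by
  rw [loopComparison, ← mateEquiv_counit_symm, ← L.map_comp_assoc]
  simp

def commIter : ∀ k, iterFunctor OmD k ⋙ R ≅ R ⋙ iterFunctor OmC k
  | 0 => Iso.refl _
  | k + 1 => Functor.isoWhiskerLeft (iterFunctor OmD k) cR ≪≫
      Functor.isoWhiskerRight (commIter k) OmC

lemma commIter_succ_hom_app (k : ℕ) (Y : D) :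
    (commIter cR (k + 1)).hom.app Y =
      cR.hom.app ((iterFunctor OmD k).obj Y) ≫ OmC.map ((commIter cR k).hom.app Y) := rfl

lemma map_iterFunctorComm_comp_commIter (k : ℕ) (Y : D) :
    R.map ((iterFunctorComm OmD k).hom.app Y) ≫ (commIter cR (k + 1)).hom.app Y =
      (commIter cR k).hom.app (OmD.obj Y) ≫ (iterFunctor OmC k).map (cR.hom.app Y) ≫
        (iterFunctorComm OmC k).hom.app (R.obj Y) := by
  induction k with
  | zero => rw [commIter_succ_hom_app]; simp [commIter]
  | succ k ih =>
    have hcR := cR.hom.naturality ((iterFunctorComm OmD k).hom.app Y)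
    rw [iterFunctorComm_succ_hom_app, iterFunctorComm_succ_hom_app,
      commIter_succ_hom_app cR (k + 1)]
    dsimp only [iterFunctor_succ_obj, iterFunctor_succ_map, Functor.comp_obj,
      Functor.comp_map] at hcR ⊢
    rw [reassoc_of% hcR, commIter_succ_hom_app cR k (OmD.obj Y)]
    erw [← OmC.map_comp (R.map _) ((commIter cR (k + 1)).hom.app Y), ih]
    simp

lemma isIso_iterFunctor_map_of_isIso_map {n : ℕ}
    (hcounit : ∀ Y : D, IsIso ((iterFunctor OmD n).map (adj.counit.app Y)))
    {Y Y' : D} (f : Y ⟶ Y') [IsIso (R.map f)] : IsIso ((iterFunctor OmD n).map f) := by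
  have fac : (iterFunctor OmD n).map (adj.counit.app Y) ≫ (iterFunctor OmD n).map f =
      (iterFunctor OmD n).map (L.map (R.map f)) ≫ (iterFunctor OmD n).map (adj.counit.app Y') := by
    rw [← Functor.map_comp, ← Functor.map_comp]
    exact congrArg _ (adj.counit.naturality f).symm
  have := hcounit Y
  have := hcounit Y'
  have : IsIso ((iterFunctor OmD n).map (adj.counit.app Y) ≫ (iterFunctor OmD n).map f) := by
    rw [fac]; infer_instance
  exact IsIso.of_isIso_comp_left ((iterFunctor OmD n).map (adj.counit.app Y)) _

lemma isIso_iterFunctor_map_loopComparison (n : ℕ)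
    (hunit : ∀ X : C, IsIso ((iterFunctor OmC n).map (adj.unit.app X)))
    (hcounit : ∀ Y : D, IsIso ((iterFunctor OmD n).map (adj.counit.app Y))) (X : C) :
    IsIso ((iterFunctor OmD (n + n)).map ((loopComparison adj cR).app X)) := by
  have := hunit X
  have := hunit (OmC.obj X)
  have : IsIso ((iterFunctor OmC n).map (OmC.map (adj.unit.app X))) :=
    (NatIso.isIso_map_iff (iterFunctorComm OmC n) (adj.unit.app X)).2
      (inferInstanceAs (IsIso (OmC.map _)))
  have : IsIso ((iterFunctor OmC n).map (R.map ((loopComparison adj cR).app X))) := by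
    have fac := congrArg (iterFunctor OmC n).map (unit_comp_map_loopComparison adj cR X)
    rw [Functor.map_comp, Functor.map_comp] at fac
    have : IsIso ((iterFunctor OmC n).map (adj.unit.app (OmC.obj X)) ≫
        (iterFunctor OmC n).map (R.map ((loopComparison adj cR).app X))) := by
      rw [fac]; infer_instance
    exact IsIso.of_isIso_comp_left ((iterFunctor OmC n).map (adj.unit.app (OmC.obj X))) _
  have : IsIso (R.map ((iterFunctor OmD n).map ((loopComparison adj cR).app X))) :=
    (NatIso.isIso_map_iff (commIter cR n) _).2 this
  rw [iterFunctor_add]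
  exact isIso_iterFunctor_map_of_isIso_map adj hcounit _

end Adjunction

section Stabilization

variable {C D : Type*} [Category C] [Category D] {OmC : C ⥤ C} {OmD : D ⥤ D} {L : C ⥤ D}
  {R : D ⥤ C} (adj : L ⊣ R) (cR : OmD ⋙ R ≅ R ⋙ OmC) (N : ℕ)
  (hγ : ∀ X : C, IsIso ((iterFunctor OmD N).map ((loopComparison adj cR).app X)))

noncomputable def loopedLeftComm : OmC ⋙ L ⋙ iterFunctor OmD N ≅ L ⋙ iterFunctor OmD N ⋙ OmD :=
  have : IsIso (Functor.whiskerRight (loopComparison adj cR) (iterFunctor OmD N)) :=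
    @NatIso.isIso_of_isIso_app _ _ _ _ _ _ _ hγ
  asIso (Functor.whiskerRight (loopComparison adj cR) (iterFunctor OmD N)) ≪≫
    Functor.isoWhiskerLeft L (iterFunctorComm OmD N)

lemma loopedLeftComm_hom_app (X : C) :
    (loopedLeftComm adj cR N hγ).hom.app X =
      (iterFunctor OmD N).map ((loopComparison adj cR).app X) ≫
        (iterFunctorComm OmD N).hom.app (L.obj X) := rfl

noncomputable def spMapCounitIso
    (hcounit : ∀ Y : D, IsIso ((iterFunctor OmD N).map (adj.counit.app Y))) :
    spMap OmD OmD (R ⋙ L ⋙ iterFunctor OmD N) (commComp cR (loopedLeftComm adj cR N hγ)) ≅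
      spMap OmD OmD (iterFunctor OmD N) (iterFunctorComm OmD N) :=
  have : IsIso (Functor.whiskerRight adj.counit (iterFunctor OmD N)) :=
    @NatIso.isIso_of_isIso_app _ _ _ _ _ _ _ hcounit
  spMapIso (asIso (Functor.whiskerRight adj.counit (iterFunctor OmD N))) fun Y => by
    have h := (iterFunctorComm OmD N).hom.naturality (adj.counit.app Y)
    dsimp only [Functor.comp_map, Functor.comp_obj, Functor.id_obj] at h
    simp only [commComp_hom_app, loopedLeftComm_hom_app, asIso_hom, Functor.whiskerRight_app,
      Functor.comp_map, Category.assoc]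
    rw [← h]
    simp only [← Functor.map_comp_assoc, map_loopComparison_counit]

noncomputable def spMapUnitIso
    (hunit : ∀ X : C, IsIso ((iterFunctor OmC N).map (adj.unit.app X))) :
    spMap OmC OmC (iterFunctor OmC N) (iterFunctorComm OmC N) ≅
      spMap OmC OmC ((L ⋙ iterFunctor OmD N) ⋙ R) (commComp (loopedLeftComm adj cR N hγ) cR) :=
  have : IsIso (Functor.whiskerRight adj.unit (iterFunctor OmC N)) :=
    @NatIso.isIso_of_isIso_app _ _ _ _ _ _ _ hunit
  spMapIso (asIso (Functor.whiskerRight adj.unit (iterFunctor OmC N)) ≪≫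
      Functor.isoWhiskerLeft L (commIter cR N).symm) fun X => by
    simp only [commComp_hom_app, loopedLeftComm_hom_app, Iso.trans_hom, asIso_hom,
      NatTrans.comp_app, Functor.whiskerRight_app, Functor.isoWhiskerLeft_hom,
      Functor.whiskerLeft_app, Iso.symm_hom, Category.assoc]
    have hρκ := map_iterFunctorComm_comp_commIter cR N (L.obj X)
    rw [commIter_succ_hom_app] at hρκ
    have hρ := (commIter cR N).hom.naturality ((loopComparison adj cR).app X)
    have hκ := (iterFunctorComm OmC N).hom.naturality (adj.unit.app X)
    have hη : adj.unit.app (OmC.obj X) ≫ R.map ((loopComparison adj cR).app X) ≫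
        cR.hom.app (L.obj X) = OmC.map (adj.unit.app X) := by
      simp [reassoc_of% unit_comp_map_loopComparison adj cR X]
    dsimp only [Functor.comp_map, Functor.comp_obj] at hρ hκ hρκ ⊢
    rw [← cancel_mono (OmC.map ((commIter cR N).hom.app (L.obj X)))]
    simp only [Functor.map_comp, Category.assoc]
    erw [hρκ]
    rw [reassoc_of% hρ, Iso.inv_hom_id_app_assoc]
    simp only [← Functor.map_comp, ← Functor.map_comp_assoc, Iso.inv_hom_id_app, hη]
    simpa using hκ.symm

end Stabilization

lemma CategoryTheory.Functor.isEquivalence_of_comp_isEquivalence {A B : Type*} [Category A]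
    [Category B] (F : A ⥤ B) (G : B ⥤ A) [(F ⋙ G).IsEquivalence] [(G ⋙ F).IsEquivalence] :
    F.IsEquivalence :=
  have : G.Faithful := Functor.Faithful.of_comp G F
  have : F.Faithful := Functor.Faithful.of_comp F G
  have : F.Full := Functor.Full.of_comp_faithful F G
  { essSurj := ⟨fun Y => ⟨G.obj ((G ⋙ F).objPreimage Y), ⟨(G ⋙ F).objObjPreimageIso Y⟩⟩⟩ }

theorem stmt5_general {C D : Type*} [Category C] [Category D]
    (OmC : C ⥤ C) (OmD : D ⥤ D)
    (L : C ⥤ D) (R : D ⥤ C) (adj : L ⊣ R) (cR : OmD ⋙ R ≅ R ⋙ OmC) (n : ℕ)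
    (hunit : ∀ X : C, IsIso ((iterFunctor OmC n).map (adj.unit.app X)))
    (hcounit : ∀ Y : D, IsIso ((iterFunctor OmD n).map (adj.counit.app Y))) :
    (spMap OmC OmD R cR).IsEquivalence := by
  have hγ := isIso_iterFunctor_map_loopComparison adj cR n hunit hcounit
  have hunit' (X : C) : IsIso ((iterFunctor OmC (n + n)).map (adj.unit.app X)) :=
    have := hunit X; isIso_iterFunctor_map_add OmC n n _
  have hcounit' (Y : D) : IsIso ((iterFunctor OmD (n + n)).map (adj.counit.app Y)) :=
    have := hcounit Y; isIso_iterFunctor_map_add OmD n n _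
  let spLoopedLeft := spMap OmD OmC (L ⋙ iterFunctor OmD (n + n)) (loopedLeftComm adj cR (n + n) hγ)
  have : (spLoopedLeft ⋙ spMap OmC OmD R cR).IsEquivalence := Functor.isEquivalence_of_iso
    (spMapUnitIso adj cR (n + n) hγ hunit' ≪≫ spMapCompIso _ _)
  have : (spMap OmC OmD R cR ⋙ spLoopedLeft).IsEquivalence := Functor.isEquivalence_of_iso
    ((spMapCounitIso adj cR (n + n) hγ hcounit').symm ≪≫ spMapCompIso _ _)
  exact Functor.isEquivalence_of_comp_isEquivalence _ spLoopedLeft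

/-- Let `L : C ⇄ D : R` be an adjunction between pointed categories with finite
limits, with loop functors `ΩC`, `ΩD` (with which the right adjoint `R` commutes, via `cR`),
such that for some `n` both `Ωⁿ(unit)` and `Ωⁿ(counit)` are equivalences.  Then the induced
functor on stabilizations `Sp(R) : Sp(D) → Sp(C)` is an equivalence. -/
theorem stmt5 {C D : Type*} [Category C] [Category D]
    [HasZeroObject C] [HasZeroObject D] [HasFiniteLimits C] [HasFiniteLimits D]
    (OmC : C ⥤ C) (OmD : D ⥤ D)
    (L : C ⥤ D) (R : D ⥤ C) (adj : L ⊣ R) (cR : OmD ⋙ R ≅ R ⋙ OmC) (n : ℕ)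
    (hunit : ∀ X : C, IsIso ((iterFunctor OmC n).map (adj.unit.app X)))
    (hcounit : ∀ Y : D, IsIso ((iterFunctor OmD n).map (adj.counit.app Y))) :
    (spMap OmC OmD R cR).IsEquivalence :=
  stmt5_general OmC OmD L R adj cR n hunit hcounit
end

section
/- Let R be a ring, M an R-bimodule, and consider the category End(R,M) of pairs (N, f : N → M ⊗_R N). Given morphisms between (A,a), (C,c) built from a short exact sequence 0 → A → C → B → 0 of underlying modules, if Hom_R(A, M ⊗_R B) = 0 then any lacing c : C → M ⊗_R C compatible with a lacing a on A descends uniquely to a lacing b on B making both maps into morphisms of laced objects. -/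
/-- given a short exact sequence `0 → A → C → B → 0` of `R`-modules, a lacing
`c : C → M ⊗_R C` compatible with a lacing `a : A → M ⊗_R A` (i.e. `A → C` is a morphism of
laced objects), and assuming `Hom_R(A, M ⊗_R B) = 0`, the lacing `c` descends uniquely to a
lacing `b : B → M ⊗_R B` making `C → B` a morphism of laced objects. -/
theorem stmt12 {R : Type*} [CommRing R] {M A B C : Type*}
    [AddCommGroup M] [Module R M] [AddCommGroup A] [Module R A]
    [AddCommGroup B] [Module R B] [AddCommGroup C] [Module R C]
    (i : A →ₗ[R] C) (p : C →ₗ[R] B)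
    (hi : Function.Injective i) (hp : Function.Surjective p) (hex : Function.Exact i p)
    (a : A →ₗ[R] TensorProduct R M A) (c : C →ₗ[R] TensorProduct R M C)
    (hcompat : (LinearMap.lTensor M i).comp a = c.comp i)
    (hvan : ∀ f : A →ₗ[R] TensorProduct R M B, f = 0) :
    ∃! b : B →ₗ[R] TensorProduct R M B, (LinearMap.lTensor M p).comp c = b.comp p := by
  set g : C →ₗ[R] TensorProduct R M B := (LinearMap.lTensor M p).comp c with hg
  have hker : LinearMap.ker p ≤ LinearMap.ker g := by
    intro x hx
    rw [LinearMap.mem_ker] at hx ⊢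
    obtain ⟨y, rfl⟩ := (hex x).mp hx
    have : g.comp i = 0 := hvan _
    calc g (i y) = (g.comp i) y := rfl
      _ = 0 := by rw [this]; rfl
  let e := p.quotKerEquivOfSurjective hp
  refine ⟨((LinearMap.ker p).liftQ g hker).comp (e.symm : B →ₗ[R] C ⧸ LinearMap.ker p),
    ?_, ?_⟩
  · ext x
    have he : e.symm (p x) = Submodule.Quotient.mk x := by
      apply e.injective
      simp [e, LinearMap.quotKerEquivOfSurjective]
    simp [LinearMap.comp_apply, he]
  · intro b hb
    ext y
    obtain ⟨x, rfl⟩ := hp y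
    have h1 : b (p x) = g x := by
      have := congrArg (fun f => f x) hb.symm
      simpa using this
    have he : e.symm (p x) = Submodule.Quotient.mk x := by
      apply e.injective
      simp [e, LinearMap.quotKerEquivOfSurjective]
    simp [LinearMap.comp_apply, he, h1]
end

section
/- In the simplex category, for the injection i_n : [0] → [n] hitting n and the projection p : [n] → [0], there is a monotone map H : [n] × [1] → [n] with H(−,0) = id and H(−,1) = i_n ∘ p, namely H(k,0) = k and H(k,1) = n. -/
/-- combinatorial core of "ρ* is a trace equivalence": for the injection
`i_n : [0] → [n]` hitting `n` and the projection `p : [n] → [0]`, there is a monotone map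
`H : [n] × [1] → [n]` with `H(−,0) = id` and `H(−,1) = i_n ∘ p`, namely `H(k,0) = k`,
`H(k,1) = n`. -/
theorem stmt15 (n : ℕ) :
    ∃ H : Fin (n + 1) × Fin 2 → Fin (n + 1),
      Monotone H ∧
        (∀ k : Fin (n + 1), H (k, 0) = k) ∧
        (∀ k : Fin (n + 1),
          H (k, 1) = (fun _ : Fin 1 => Fin.last n) ((fun _ : Fin (n + 1) => (0 : Fin 1)) k)) := by
  refine ⟨fun p => if p.2 = 0 then p.1 else Fin.last n, ?_, fun k => by simp, fun k => by simp⟩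
  rintro ⟨a, s⟩ ⟨b, t⟩ ⟨h1, h2⟩
  dsimp at *
  by_cases hs : s = 0 <;> by_cases ht : t = 0 <;>
    simp only [hs, ht, if_true, if_pos, if_neg, reduceCtorEq, ite_true, ite_false] <;>
    first
      | exact h1
      | exact Fin.le_last _
      | exact le_refl _
      | omega
end
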